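/- arXiv:1706.09310 — 7 statements merged into one kernel-verified Lean document; each statement's English description precedes it below -/
import Mathlib

section
/- Let G be a simple graph on a finite nonempty vertex set V, with n = |V| vertices, m edges, and maximum degree Δ. For c ∈ V, let Star(c) denote the simple graph on V in which two distinct vertices are adjacent if and only if one of them equals c. Then the graph edit distance between G and a star graph on the same vertex set — that is, the minimum, over all simple graphs H on V that are isomorphic to Star(c₀) for some c₀ ∈ V, of the cardinality of the symmetric difference of the edge sets of G and H — equals n + m − 2Δ − 1 (note that 2Δ + 1 ≤ n + m, so this quantity is a non-negative integer). -/
/-- The star graph on vertex set `V` centered at `c`: two distinct vertices are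
adjacent if and only if one of them equals `c`. -/
def starGraph {V : Type*} (c : V) : SimpleGraph V where
  Adj v w := v ≠ w ∧ (v = c ∨ w = c)
  symm := by
    constructor
    intro v w h
    exact ⟨h.1.symm, h.2.symm⟩
  loopless := by
    constructor
    intro v h
    exact h.1 rfl

/-!
A graph isomorphic to a star is itself a star `starGraph c`. The edges `G` shares with
`starGraph c` are exactly the `deg c` edges of `G` at `c`, and the star, being a tree, has
`n - 1` edges, so the symmetric difference has `m + (n - 1) - 2 deg c` edges. This is smallest
when `c` has maximum degree.
-/

open Finset

theorem starGraph_eq_simpleGraph_starGraph {V : Type*} (c : V) :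
    starGraph c = SimpleGraph.starGraph c := by
  ext
  exact SimpleGraph.starGraph_adj.symm

theorem Finset.card_symmDiff_add_two_mul_card_inter {α : Type*} [DecidableEq α]
    (s t : Finset α) : #(symmDiff s t) + 2 * #(s ∩ t) = #s + #t := by
  rw [symmDiff_eq_sup_sdiff_inf, sup_eq_union, inf_eq_inter, two_mul, ← add_assoc,
    card_sdiff_add_card_eq_card inter_subset_union, card_union_add_card_inter]

namespace SimpleGraph

variable {V : Type*}

theorem eq_starGraph_of_iso {H : SimpleGraph V} {c : V} (φ : H ≃g starGraph c) :
    H = starGraph (φ.symm c) := by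
  ext v w
  rw [← φ.map_adj_iff]
  simp only [starGraph_adj, φ.injective.ne_iff, ← RelIso.eq_symm_apply]

variable [Fintype V] [DecidableEq V]

theorem edgeFinset_inter_starGraph (G : SimpleGraph V) [DecidableRel G.Adj] (c : V) :
    G.edgeFinset ∩ (starGraph c).edgeFinset = G.incidenceFinset c := by
  ext e
  induction e using Sym2.ind with
  | _ v w =>
    simp only [Finset.mem_inter, mem_edgeFinset, mem_incidenceFinset, mk'_mem_incidenceSet_iff,
      mem_edgeSet, starGraph_adj, eq_comm (b := c)]
    exact ⟨fun ⟨h, _, hc⟩ => ⟨h, hc⟩, fun ⟨h, hc⟩ => ⟨h, h.ne, hc⟩⟩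

theorem ncard_symmDiff_edgeSet_starGraph_add_two_mul_degree (G : SimpleGraph V)
    [DecidableRel G.Adj] (c : V) :
    (symmDiff G.edgeSet (starGraph c).edgeSet).ncard + 2 * G.degree c + 1
      = #G.edgeFinset + Fintype.card V := by
  rw [← coe_edgeFinset, ← coe_edgeFinset, ← coe_symmDiff, Set.ncard_coe_finset,
    ← card_incidenceFinset_eq_degree, ← edgeFinset_inter_starGraph,
    card_symmDiff_add_two_mul_card_inter, add_assoc, (isTree_starGraph c).card_edgeFinset]

end SimpleGraph

/-- The graph edit distance between a simple graph `G` on a finite nonempty vertex set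
(with `n` vertices, `m` edges, and maximum degree `Δ`) and a star graph on the same
vertex set equals `n + m - 2Δ - 1` (and `2Δ + 1 ≤ n + m`). -/
theorem ged_to_star {V : Type*} [Fintype V] [DecidableEq V] [Nonempty V]
    (G : SimpleGraph V) [DecidableRel G.Adj] :
    2 * G.maxDegree + 1 ≤ Fintype.card V + G.edgeFinset.card ∧
    sInf {k : ℕ | ∃ H : SimpleGraph V,
        (∃ c₀ : V, Nonempty (H ≃g starGraph c₀)) ∧
        k = (symmDiff G.edgeSet H.edgeSet).ncard}
      = Fintype.card V + G.edgeFinset.card - 2 * G.maxDegree - 1 := by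
  simp only [starGraph_eq_simpleGraph_starGraph]
  obtain ⟨c₀, hc₀⟩ := G.exists_maximal_degree_vertex
  have hΔn := G.maxDegree_lt_card_verts
  have hΔm : G.maxDegree ≤ #G.edgeFinset := hc₀ ▸ G.degree_le_card_edgeFinset c₀
  refine ⟨by omega, IsLeast.csInf_eq ⟨?_, ?_⟩⟩
  · refine ⟨SimpleGraph.starGraph c₀, ⟨c₀, ⟨.refl⟩⟩, ?_⟩
    have := G.ncard_symmDiff_edgeSet_starGraph_add_two_mul_degree c₀
    omega
  · rintro k ⟨H, ⟨c, ⟨φ⟩⟩, rfl⟩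
    rw [SimpleGraph.eq_starGraph_of_iso φ]
    have := G.ncard_symmDiff_edgeSet_starGraph_add_two_mul_degree (φ.symm c)
    have := G.degree_le_maxDegree (φ.symm c)
    omega
end

section
/- Fix an observation map o : Ω → Y and suppose every σ_X is non-negative and monotone increasing (σ_X(A) ≤ σ_X(B) whenever A ⊆ B ⊆ V). Then the two-phase objective f_o is non-negative and monotone increasing: 0 ≤ f_o(S₁) ≤ f_o(T₁) whenever S₁ ⊆ T₁ ⊆ V. -/
/-- The two-phase influence maximization objective: given live-graph weights `p`,
influence functions `σ`, second-phase budget `k₂`, and an observation map `o`,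
`twoPhaseObj p σ k₂ o S₁ = Σ_{y ∈ o(Ω)} max { Σ_{X : o X = y} p X · σ X (S₁ ∪ S₂) :
S₂ ⊆ V \ S₁, |S₂| ≤ k₂ }`. -/
noncomputable def twoPhaseObj {V Ω Y : Type*} [Fintype V] [DecidableEq V] [Fintype Ω]
    [DecidableEq Y] (p : Ω → ℝ) (σ : Ω → Finset V → ℝ) (k₂ : ℕ) (o : Ω → Y)
    (S₁ : Finset V) : ℝ :=
  ∑ y ∈ Finset.univ.image o,
    ((Finset.univ \ S₁).powerset.filter (fun S₂ => S₂.card ≤ k₂)).sup'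
      (Finset.filter_nonempty_iff.mpr
        ⟨∅, Finset.mem_powerset.mpr (Finset.empty_subset _), by simp⟩)
      (fun S₂ => ∑ X ∈ Finset.univ.filter (fun X => o X = y), p X * σ X (S₁ ∪ S₂))

/-- If every `σ_X` is non-negative and monotone increasing, then the two-phase
objective `f_o` is non-negative and monotone increasing. -/
theorem twoPhaseObj_nonneg_monotone {V Ω Y : Type*} [Fintype V] [DecidableEq V]
    [Fintype Ω] [DecidableEq Y]
    (p : Ω → ℝ) (hp : ∀ X, 0 ≤ p X) (hpsum : ∑ X, p X = 1)
    (σ : Ω → Finset V → ℝ)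
    (hσ0 : ∀ X (S : Finset V), 0 ≤ σ X S)
    (hσmono : ∀ X (A B : Finset V), A ⊆ B → σ X A ≤ σ X B)
    (k₂ : ℕ) (o : Ω → Y) :
    ∀ S₁ T₁ : Finset V, S₁ ⊆ T₁ →
      0 ≤ twoPhaseObj p σ k₂ o S₁ ∧
      twoPhaseObj p σ k₂ o S₁ ≤ twoPhaseObj p σ k₂ o T₁ := by
  intro S₁ T₁ hST
  constructor
  · apply Finset.sum_nonneg
    intro y hy
    apply le_trans _ (Finset.le_sup' _ (Finset.mem_filter.mpr
      ⟨Finset.mem_powerset.mpr (Finset.empty_subset _), by simp⟩))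
    exact Finset.sum_nonneg fun X _ => mul_nonneg (hp X) (hσ0 X _)
  · apply Finset.sum_le_sum
    intro y hy
    apply Finset.sup'_le
    intro S₂ hS₂
    rw [Finset.mem_filter, Finset.mem_powerset] at hS₂
    obtain ⟨hsub, hcard⟩ := hS₂
    have hmem : S₂ \ T₁ ∈ (Finset.univ \ T₁).powerset.filter (fun S => S.card ≤ k₂) := by
      refine Finset.mem_filter.mpr ⟨Finset.mem_powerset.mpr ?_, le_trans (Finset.card_le_card (Finset.sdiff_subset)) hcard⟩
      intro x hx
      rw [Finset.mem_sdiff] at hx ⊢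
      exact ⟨Finset.mem_univ x, hx.2⟩
    apply le_trans _ (Finset.le_sup' _ hmem)
    apply Finset.sum_le_sum
    intro X hX
    apply mul_le_mul_of_nonneg_left _ (hp X)
    apply hσmono
    intro x hx
    rw [Finset.mem_union] at hx ⊢
    rcases hx with h | h
    · exact Or.inl (hST h)
    · by_cases hT : x ∈ T₁
      · exact Or.inl hT
      · exact Or.inr (Finset.mem_sdiff.mpr ⟨h, hT⟩)
end

section
/- Fix an observation map o : Ω → Y and suppose every σ_X is subadditive (σ_X(A ∪ B) ≤ σ_X(A) + σ_X(B) for all A, B ⊆ V). Then the two-phase objective f_o is subadditive: f_o(S₁ ∪ T₁) ≤ f_o(S₁) + f_o(T₁) for all S₁, T₁ ⊆ V. -/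
/-- If every `σ_X` is subadditive, then the two-phase objective `f_o` is subadditive. -/
theorem twoPhaseObj_subadditive {V Ω Y : Type*} [Fintype V] [DecidableEq V]
    [Fintype Ω] [DecidableEq Y]
    (p : Ω → ℝ) (hp : ∀ X, 0 ≤ p X) (hpsum : ∑ X, p X = 1)
    (σ : Ω → Finset V → ℝ)
    (hσsub : ∀ X (A B : Finset V), σ X (A ∪ B) ≤ σ X A + σ X B)
    (k₂ : ℕ) (o : Ω → Y) :
    ∀ S₁ T₁ : Finset V,
      twoPhaseObj p σ k₂ o (S₁ ∪ T₁) ≤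
        twoPhaseObj p σ k₂ o S₁ + twoPhaseObj p σ k₂ o T₁ := by
  intro S₁ T₁
  unfold twoPhaseObj
  rw [← Finset.sum_add_distrib]
  apply Finset.sum_le_sum
  intro y _
  apply Finset.sup'_le
  intro S₂ hS₂
  rw [Finset.mem_filter, Finset.mem_powerset] at hS₂
  have hA : S₂ ∈ (Finset.univ \ S₁).powerset.filter (fun S₂ => S₂.card ≤ k₂) := by
    rw [Finset.mem_filter, Finset.mem_powerset]
    refine ⟨hS₂.1.trans ?_, hS₂.2⟩
    intro x hx; simp only [Finset.mem_sdiff, Finset.mem_union] at *; tauto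
  have hB : S₂ ∈ (Finset.univ \ T₁).powerset.filter (fun S₂ => S₂.card ≤ k₂) := by
    rw [Finset.mem_filter, Finset.mem_powerset]
    refine ⟨hS₂.1.trans ?_, hS₂.2⟩
    intro x hx; simp only [Finset.mem_sdiff, Finset.mem_union] at *; tauto
  calc ∑ X ∈ Finset.univ.filter (fun X => o X = y), p X * σ X (S₁ ∪ T₁ ∪ S₂)
      ≤ ∑ X ∈ Finset.univ.filter (fun X => o X = y),
          (p X * σ X (S₁ ∪ S₂) + p X * σ X (T₁ ∪ S₂)) := by
        apply Finset.sum_le_sum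
        intro X _
        rw [← mul_add]
        apply mul_le_mul_of_nonneg_left _ (hp X)
        have : S₁ ∪ T₁ ∪ S₂ = (S₁ ∪ S₂) ∪ (T₁ ∪ S₂) := by
          ext x; simp [Finset.mem_union]; tauto
        rw [this]; exact hσsub X _ _
    _ = (∑ X ∈ Finset.univ.filter (fun X => o X = y), p X * σ X (S₁ ∪ S₂))
        + ∑ X ∈ Finset.univ.filter (fun X => o X = y), p X * σ X (T₁ ∪ S₂) :=
        Finset.sum_add_distrib
    _ ≤ _ := add_le_add
        (Finset.le_sup' (fun S₂ => ∑ X ∈ Finset.univ.filter (fun X => o X = y), p X * σ X (S₁ ∪ S₂)) hA)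
        (Finset.le_sup' (fun S₂ => ∑ X ∈ Finset.univ.filter (fun X => o X = y), p X * σ X (T₁ ∪ S₂)) hB)
end

section
/- Refining the partial observation cannot decrease the two-phase objective: fix a first-phase seed set S₁ ⊆ V, and let o : Ω → Y and o' : Ω → Y' be observation maps such that o' refines o, i.e., o = g ∘ o' for some function g : Y' → Y (in the paper, the partial observation at a later time step d⁺ > d refines the partial observation at time step d). Then f_{o'}(S₁) ≥ f_o(S₁). -/
/-- Refining the partial observation cannot decrease the two-phase objective:
if `o = g ∘ o'` (i.e. `o'` refines `o`), then `f_{o'}(S₁) ≥ f_o(S₁)`. -/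
theorem twoPhaseObj_refine {V Ω Y Y' : Type*} [Fintype V] [DecidableEq V]
    [Fintype Ω] [DecidableEq Y] [DecidableEq Y']
    (p : Ω → ℝ) (hp : ∀ X, 0 ≤ p X) (hpsum : ∑ X, p X = 1)
    (σ : Ω → Finset V → ℝ) (k₂ : ℕ) (S₁ : Finset V)
    (o : Ω → Y) (o' : Ω → Y') (g : Y' → Y) (hrefine : o = g ∘ o') :
    twoPhaseObj p σ k₂ o S₁ ≤ twoPhaseObj p σ k₂ o' S₁ := by
  classical
  unfold twoPhaseObj
  rw [← Finset.sum_fiberwise_of_maps_to (g := g) (t := Finset.univ.image o)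
    (by
      intro y' hy'
      simp only [Finset.mem_image] at hy' ⊢
      obtain ⟨X, _, rfl⟩ := hy'
      exact ⟨X, Finset.mem_univ X, by rw [hrefine]; rfl⟩)]
  apply Finset.sum_le_sum
  intro y hy
  apply Finset.sup'_le
  intro S₂ hS₂
  have hsplit : ∑ X ∈ Finset.univ.filter (fun X => o X = y), p X * σ X (S₁ ∪ S₂)
      = ∑ y' ∈ (Finset.univ.image o').filter (fun y' => g y' = y),
          ∑ X ∈ Finset.univ.filter (fun X => o' X = y'), p X * σ X (S₁ ∪ S₂) := by
    rw [← Finset.sum_fiberwise_of_maps_to (g := o')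
      (t := (Finset.univ.image o').filter (fun y' => g y' = y))
      (by
        intro X hX
        simp only [Finset.mem_filter, Finset.mem_univ, true_and] at hX
        simp only [Finset.mem_filter, Finset.mem_image]
        exact ⟨⟨X, Finset.mem_univ X, rfl⟩, by rw [← hX, hrefine]; rfl⟩)]
    apply Finset.sum_congr rfl
    intro y' hy'
    simp only [Finset.mem_filter] at hy'
    apply Finset.sum_congr _ (fun _ _ => rfl)
    rw [Finset.filter_filter]
    apply Finset.filter_congr
    intro X _
    constructor
    · rintro ⟨_, h2⟩; exact h2
    · intro h2; exact ⟨by rw [hrefine, Function.comp_apply, h2, hy'.2], h2⟩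
  rw [hsplit]
  apply Finset.sum_le_sum
  intro y' _
  exact Finset.le_sup'
    (fun S₂ => ∑ X ∈ Finset.univ.filter (fun X => o' X = y'), p X * σ X (S₁ ∪ S₂)) hS₂
end

section
/- The temporal influence objective ν is non-negative, monotone increasing, and submodular: ν(S) ≥ 0 for every finite subset S ⊆ V; ν(S) ≤ ν(T) whenever S ⊆ T ⊆ V; and ν(S ∪ {i}) − ν(S) ≥ ν(T ∪ {i}) − ν(T) whenever S ⊆ T ⊆ V and i ∈ V ∖ T. -/
lemma gamma_min_eq_max {Γ : ℕ∞ → ℝ} (hΓanti : Antitone Γ) (a b : ℕ∞) :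
    Γ (a ⊓ b) = max (Γ a) (Γ b) := by
  rcases le_total a b with h | h
  · rw [inf_eq_left.mpr h, max_eq_left (hΓanti h)]
  · rw [inf_eq_right.mpr h, max_eq_right (hΓanti h)]

/-- The temporal influence objective `ν(S) = Σ_{j∈V} Σ_{X∈Ω} p(X)·Γ(min_{s∈S} τ_X(s,j))`
(where the min over the empty set is `⊤`) is non-negative, monotone increasing, and
submodular, for any non-increasing `Γ : ℕ∞ → ℝ` with `0 ≤ Γ(t) ≤ 1` and `Γ(⊤) = 0`. -/
theorem temporalObj_nonneg_monotone_submodular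
    {V Ω : Type*} [Fintype V] [DecidableEq V] [Fintype Ω]
    (p : Ω → ℝ) (hp : ∀ X, 0 ≤ p X) (hpsum : ∑ X, p X = 1)
    (τ : Ω → V → V → ℕ∞)
    (Γ : ℕ∞ → ℝ) (hΓanti : Antitone Γ)
    (hΓ0 : ∀ t, 0 ≤ Γ t) (hΓ1 : ∀ t, Γ t ≤ 1) (hΓtop : Γ ⊤ = 0)
    (ν : Finset V → ℝ)
    (hν : ∀ S : Finset V, ν S = ∑ j : V, ∑ X : Ω, p X * Γ (S.inf fun s => τ X s j)) :
    (∀ S : Finset V, 0 ≤ ν S) ∧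
    (∀ S T : Finset V, S ⊆ T → ν S ≤ ν T) ∧
    (∀ S T : Finset V, S ⊆ T → ∀ i ∈ Finset.univ \ T,
      ν (T ∪ {i}) - ν T ≤ ν (S ∪ {i}) - ν S) := by
  refine ⟨?_, ?_, ?_⟩
  · intro S
    rw [hν]
    refine Finset.sum_nonneg fun j _ => Finset.sum_nonneg fun X _ =>
      mul_nonneg (hp X) (hΓ0 _)
  · intro S T hST
    rw [hν, hν]
    refine Finset.sum_le_sum fun j _ => Finset.sum_le_sum fun X _ =>
      mul_le_mul_of_nonneg_left ?_ (hp X)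
    exact hΓanti (Finset.inf_mono hST)
  · intro S T hST i _
    rw [sub_le_sub_iff]
    simp only [hν, ← Finset.sum_add_distrib]
    refine Finset.sum_le_sum fun j _ => Finset.sum_le_sum fun X _ => ?_
    rw [← mul_add, ← mul_add]
    refine mul_le_mul_of_nonneg_left ?_ (hp X)
    rw [Finset.inf_union, Finset.inf_union, Finset.inf_singleton,
      gamma_min_eq_max hΓanti, gamma_min_eq_max hΓanti]
    have h1 : Γ (S.inf fun s => τ X s j) ≤ Γ (T.inf fun s => τ X s j) :=
      hΓanti (Finset.inf_mono hST)
    set a := Γ (S.inf fun s => τ X s j)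
    set b := Γ (T.inf fun s => τ X s j)
    set c := Γ (τ X i j)
    rcases le_total c a with h | h
    · rw [max_eq_left h, max_eq_left (le_trans h h1)]
      linarith
    · rw [max_eq_right h]
      rcases le_total c b with h' | h'
      · rw [max_eq_left h']; linarith
      · rw [max_eq_right h']; linarith
end

section
/- For every player j ∈ N, the Shapley value of j in the game (N, ν) equals half the total similarity of j with the other players: Σ_{S ⊆ N, j ∈ S} ((|S|−1)!·(n−|S|)!/n!)·(ν(S) − ν(S ∖ {j})) = (1/2)·Σ_{i ∈ N, i ≠ j} c(i,j) = φ_j. -/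
open Finset

/-- Gauss-type identity for the Shapley weights. -/
lemma shapley_weight_half (m : ℕ) :
    ∑ k ∈ Finset.range (m + 1),
        ((m.choose k : ℝ)) * (((k + 1).factorial : ℝ) * ((m - k).factorial : ℝ) /
          ((m + 2).factorial : ℝ)) = 1 / 2 := by
  have hne : ((m + 2).factorial : ℝ) ≠ 0 := by positivity
  have hterm : ∀ k ∈ Finset.range (m + 1),
      ((m.choose k : ℝ)) * (((k + 1).factorial : ℝ) * ((m - k).factorial : ℝ) /
        ((m + 2).factorial : ℝ))
      = ((k : ℝ) + 1) * (m.factorial : ℝ) / ((m + 2).factorial : ℝ) := by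
    intro k hk
    have hk' : k ≤ m := Nat.lt_succ_iff.mp (Finset.mem_range.mp hk)
    have h1 : (m.choose k) * k.factorial * (m - k).factorial = m.factorial :=
      Nat.choose_mul_factorial_mul_factorial hk'
    have h1' : ((m.choose k : ℝ)) * (k.factorial : ℝ) * ((m - k).factorial : ℝ)
        = (m.factorial : ℝ) := by exact_mod_cast congrArg (Nat.cast : ℕ → ℝ) h1
    have h2 : ((k + 1).factorial : ℝ) = ((k : ℝ) + 1) * (k.factorial : ℝ) := by
      rw [Nat.factorial_succ]; push_cast; ring
    rw [h2]
    field_simp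
    nlinarith [h1']
  rw [Finset.sum_congr rfl hterm, ← Finset.sum_div, ← Finset.sum_mul]
  clear hterm hne
  have hg : (∑ k ∈ Finset.range (m + 1), ((k : ℝ) + 1)) * 2 = ((m : ℝ) + 1) * ((m : ℝ) + 2) := by
    induction m with
    | zero => simp
    | succ n ih =>
      rw [Finset.sum_range_succ]
      push_cast at ih ⊢
      linarith
  have hg' : ∑ k ∈ Finset.range (m + 1), ((k : ℝ) + 1) = ((m : ℝ) + 1) * ((m : ℝ) + 2) / 2 := by
    linarith
  rw [hg']
  have hfact : ((m + 2).factorial : ℝ) = (m.factorial : ℝ) * (m + 1) * (m + 2) := by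
    rw [show m + 2 = (m + 1) + 1 from rfl, Nat.factorial_succ, Nat.factorial_succ]
    push_cast; ring
  rw [hfact]
  have hm : (m.factorial : ℝ) ≠ 0 := by positivity
  push_cast
  field_simp

/-- The sum of Shapley weights over all coalitions containing two fixed distinct
players equals `1/2`. -/
lemma shapley_pair_weight {N : Type*} [Fintype N] [DecidableEq N] (i j : N) (hij : i ≠ j) :
    ∑ S ∈ Finset.univ.powerset.filter (fun S => j ∈ S ∧ i ∈ S),
      (((S.card - 1).factorial : ℝ) * ((Fintype.card N - S.card).factorial : ℝ) /
        ((Fintype.card N).factorial : ℝ)) = 1 / 2 := by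
  classical
  set U : Finset N := (Finset.univ.erase j).erase i with hU
  have hiU : i ∉ U := Finset.notMem_erase _ _
  have hjU : j ∉ U := fun h => Finset.notMem_erase j _ (Finset.mem_of_mem_erase h)
  have hcardN : Fintype.card N = U.card + 2 := by
    have h1 : (Finset.univ.erase j).card = Fintype.card N - 1 := by
      rw [Finset.card_erase_of_mem (Finset.mem_univ j), Finset.card_univ]
    have h2 : U.card = (Finset.univ.erase j).card - 1 := by
      rw [hU, Finset.card_erase_of_mem (Finset.mem_erase.mpr ⟨hij, Finset.mem_univ i⟩)]
    have hle : 2 ≤ Fintype.card N := Fintype.one_lt_card_iff_nontrivial.mpr ⟨⟨i, j, hij⟩⟩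
    omega
  -- reindex the sum over a powerset of U
  have hbij : ∑ S ∈ Finset.univ.powerset.filter (fun S => j ∈ S ∧ i ∈ S),
      (((S.card - 1).factorial : ℝ) * ((Fintype.card N - S.card).factorial : ℝ) /
        ((Fintype.card N).factorial : ℝ))
      = ∑ T ∈ U.powerset,
      ((((T.card + 2) - 1).factorial : ℝ) * ((Fintype.card N - (T.card + 2)).factorial : ℝ) /
        ((Fintype.card N).factorial : ℝ)) := by
    apply Finset.sum_nbij' (fun S => (S.erase j).erase i) (fun T => insert j (insert i T))
    · intro S hS
      simp only [Finset.mem_filter, Finset.mem_powerset] at hS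
      simp only [Finset.mem_powerset, hU]
      intro x hx
      simp only [Finset.mem_erase] at hx ⊢
      exact ⟨hx.1, hx.2.1, Finset.mem_univ x⟩
    · intro T hT
      simp only [Finset.mem_powerset] at hT
      simp only [Finset.mem_filter, Finset.mem_powerset]
      refine ⟨Finset.subset_univ _, Finset.mem_insert_self _ _, ?_⟩
      exact Finset.mem_insert_of_mem (Finset.mem_insert_self _ _)
    · intro S hS
      simp only [Finset.mem_filter, Finset.mem_powerset] at hS
      rw [Finset.insert_erase (Finset.mem_erase.mpr ⟨hij, hS.2.2⟩), Finset.insert_erase hS.2.1]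
    · intro T hT
      simp only [Finset.mem_powerset] at hT
      have hiT : i ∉ T := fun h => hiU (hT h)
      have hjT : j ∉ T := fun h => hjU (hT h)
      rw [Finset.erase_insert (by simp [hij.symm, hjT] : j ∉ insert i T)]
      rw [Finset.erase_insert hiT]
    · intro S hS
      simp only [Finset.mem_filter, Finset.mem_powerset] at hS
      have hcard : ((S.erase j).erase i).card + 2 = S.card := by
        rw [Finset.card_erase_of_mem (Finset.mem_erase.mpr ⟨hij, hS.2.2⟩),
          Finset.card_erase_of_mem hS.2.1]
        have h1 : 1 ≤ S.card := Finset.card_pos.mpr ⟨j, hS.2.1⟩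
        have h2 : 2 ≤ S.card := by
          have := Finset.one_lt_card.mpr ⟨j, hS.2.1, i, hS.2.2, Ne.symm hij⟩
          omega
        omega
      rw [hcard]
  rw [hbij]
  rw [Finset.sum_powerset]
  have hconst : ∀ k ∈ Finset.range (U.card + 1),
      ∑ T ∈ Finset.powersetCard k U,
        ((((T.card + 2) - 1).factorial : ℝ) * ((Fintype.card N - (T.card + 2)).factorial : ℝ) /
          ((Fintype.card N).factorial : ℝ))
      = (U.card.choose k : ℝ) * (((k + 1).factorial : ℝ) * ((U.card - k).factorial : ℝ) /
          ((U.card + 2).factorial : ℝ)) := by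
    intro k hk
    rw [Finset.sum_congr rfl (fun T hT => by
      have hTk : T.card = k := (Finset.mem_powersetCard.mp hT).2
      have h1 : (T.card + 2) - 1 = k + 1 := by omega
      have h2 : Fintype.card N - (T.card + 2) = U.card - k := by omega
      rw [h1, h2, hcardN])]
    rw [Finset.sum_const, Finset.card_powersetCard, nsmul_eq_mul]
  rw [Finset.sum_congr rfl hconst]
  exact shapley_weight_half U.card

/-- In the TU game `ν(S) = Σ_{{i,j}⊆S, i≠j} c(i,j)` with symmetric `c`, the Shapley
value of every player `j` equals half the total similarity of `j` with the other
players, i.e. equals `φ_j = (1/2)·Σ_{i≠j} c(i,j)`. -/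
theorem shapley_eq_half_similarity {N : Type*} [Fintype N] [DecidableEq N]
    (c : N → N → ℝ) (hsymm : ∀ i j, c i j = c j i)
    (ν : Finset N → ℝ)
    (hν : ∀ S : Finset N, ν S = (∑ i ∈ S, ∑ j ∈ S.erase i, c i j) / 2)
    (φ : N → ℝ)
    (hφ : ∀ i : N, φ i = (∑ j ∈ Finset.univ.erase i, c i j) / 2)
    (j : N) :
    (∑ S ∈ Finset.univ.powerset.filter (fun S => j ∈ S),
        (((S.card - 1).factorial : ℝ) * ((Fintype.card N - S.card).factorial : ℝ) /
            ((Fintype.card N).factorial : ℝ)) * (ν S - ν (S.erase j)))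
      = (∑ i ∈ Finset.univ.erase j, c i j) / 2 ∧
    (∑ i ∈ Finset.univ.erase j, c i j) / 2 = φ j := by
  classical
  refine ⟨?_, by rw [hφ j]; exact congrArg (· / 2) (Finset.sum_congr rfl fun i _ => hsymm i j)⟩
  -- marginal contribution
  have hmarg : ∀ S : Finset N, j ∈ S → ν S - ν (S.erase j) = ∑ i ∈ S.erase j, c i j := by
    intro S hj
    rw [hν, hν]
    have hsplit : ∑ i ∈ S, ∑ k ∈ S.erase i, c i k
        = (∑ i ∈ S.erase j, ∑ k ∈ (S.erase j).erase i, c i k)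
          + 2 * ∑ i ∈ S.erase j, c i j := by
      rw [← Finset.sum_erase_add _ _ hj]
      have hrow : ∀ i ∈ S.erase j, ∑ k ∈ S.erase i, c i k
          = (∑ k ∈ (S.erase j).erase i, c i k) + c i j := by
        intro i hi
        have hiS := Finset.mem_erase.mp hi
        have hjSi : j ∈ S.erase i := Finset.mem_erase.mpr ⟨(hiS.1).symm, hj⟩
        rw [← Finset.sum_erase_add _ _ hjSi, Finset.erase_right_comm]
      rw [Finset.sum_congr rfl hrow, Finset.sum_add_distrib]
      have hjrow : ∑ k ∈ S.erase j, c j k = ∑ k ∈ S.erase j, c k j :=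
        Finset.sum_congr rfl (fun k _ => hsymm j k)
      rw [hjrow]
      ring
    rw [hsplit]
    ring
  rw [Finset.sum_congr rfl (fun S hS => by
    rw [hmarg S ((Finset.mem_filter.mp hS).2)])]
  -- expand inner sum over univ.erase j
  have hinner : ∀ S : Finset N,
      (((S.card - 1).factorial : ℝ) * ((Fintype.card N - S.card).factorial : ℝ) /
        ((Fintype.card N).factorial : ℝ)) * (∑ i ∈ S.erase j, c i j)
      = ∑ i ∈ Finset.univ.erase j, (if i ∈ S then
        (((S.card - 1).factorial : ℝ) * ((Fintype.card N - S.card).factorial : ℝ) /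
          ((Fintype.card N).factorial : ℝ)) * c i j else 0) := by
    intro S
    rw [Finset.mul_sum, ← Finset.sum_filter]
    congr 1
    ext x
    simp only [Finset.mem_filter, Finset.mem_erase, Finset.mem_univ, and_true]
  rw [Finset.sum_congr rfl (fun S _ => hinner S), Finset.sum_comm]
  have hfinal : ∀ i ∈ Finset.univ.erase j,
      ∑ S ∈ Finset.univ.powerset.filter (fun S => j ∈ S), (if i ∈ S then
        (((S.card - 1).factorial : ℝ) * ((Fintype.card N - S.card).factorial : ℝ) /
          ((Fintype.card N).factorial : ℝ)) * c i j else 0)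
      = c i j / 2 := by
    intro i hi
    have hij : i ≠ j := (Finset.mem_erase.mp hi).1
    rw [← Finset.sum_filter, Finset.filter_filter]
    rw [show (∑ S ∈ Finset.univ.powerset.filter (fun S => j ∈ S ∧ i ∈ S),
        (((S.card - 1).factorial : ℝ) * ((Fintype.card N - S.card).factorial : ℝ) /
          ((Fintype.card N).factorial : ℝ)) * c i j)
      = (∑ S ∈ Finset.univ.powerset.filter (fun S => j ∈ S ∧ i ∈ S),
        (((S.card - 1).factorial : ℝ) * ((Fintype.card N - S.card).factorial : ℝ) /
          ((Fintype.card N).factorial : ℝ))) * c i j from (Finset.sum_mul _ _ _).symm]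
    rw [shapley_pair_weight i j hij]
    ring
  rw [Finset.sum_congr rfl hfinal, Finset.sum_div]
end

section
/- For every r ≥ 1, the maximum possible Footrule distance between two preferences over r alternatives equals 2·⌈r/2⌉·⌊r/2⌋: for all permutations p, q of Fin r, Σ_a |p(a) − q(a)| ≤ 2·⌈r/2⌉·⌊r/2⌋, and there exist permutations p, q of Fin r attaining this bound. -/
open Finset

lemma T_eq (r : ℕ) :
    (∑ i ∈ Finset.range r, |2 * (i : ℤ) - ((r : ℤ) - 1)|)
      = ((2 * ((r + 1) / 2) * (r / 2) : ℕ) : ℤ) := by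
  induction r using Nat.twoStepInduction with
  | zero => simp
  | one => simp
  | more n ih _ =>
    have h1 : (∑ i ∈ Finset.range (n+2), |2 * (i : ℤ) - (((n+2 : ℕ) : ℤ) - 1)|)
        = (∑ i ∈ Finset.range n, |2 * (i : ℤ) - ((n : ℤ) - 1)|) + 2 * ((n : ℤ) + 1) := by
      rw [Finset.sum_range_succ, Finset.sum_range_succ']
      have h0 : |2 * ((0:ℕ) : ℤ) - (((n+2 : ℕ) : ℤ) - 1)| = (n : ℤ) + 1 := by
        push_cast
        rw [abs_of_nonpos (by linarith [Int.natCast_nonneg n])]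
        ring
      have hl : |2 * (((n+1 : ℕ)) : ℤ) - (((n+2 : ℕ) : ℤ) - 1)| = (n : ℤ) + 1 := by
        push_cast
        rw [abs_of_nonneg (by linarith [Int.natCast_nonneg n])]
        ring
      have hm : ∀ i ∈ Finset.range n,
          |2 * (((i+1 : ℕ)) : ℤ) - (((n+2 : ℕ) : ℤ) - 1)| = |2 * (i : ℤ) - ((n : ℤ) - 1)| := by
        intro i _
        push_cast
        ring_nf
      rw [Finset.sum_congr rfl hm, h0, hl]
      ring
    rw [h1, ih]
    obtain ⟨m, rfl | rfl⟩ := Nat.even_or_odd' n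
    · have e1 : (2*m + 2 + 1)/2 = m + 1 := by omega
      have e2 : (2*m + 2)/2 = m + 1 := by omega
      have e3 : (2*m + 1)/2 = m := by omega
      have e4 : (2*m)/2 = m := by omega
      rw [e1, e2, e3, e4]
      push_cast
      ring
    · have e1 : (2*m + 1 + 2 + 1)/2 = m + 2 := by omega
      have e2 : (2*m + 1 + 2)/2 = m + 1 := by omega
      have e3 : (2*m + 1 + 1)/2 = m + 1 := by omega
      have e4 : (2*m + 1)/2 = m := by omega
      rw [e1, e2, e3, e4]
      push_cast
      ring

/-- For every `r ≥ 1`, the maximum possible Footrule distance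
`Σ_a |p(a) − q(a)|` between two preferences (permutations of `Fin r`) equals
`2·⌈r/2⌉·⌊r/2⌋`: every pair of permutations satisfies the bound, and some pair
attains it. -/
theorem max_footrule_distance (r : ℕ) (hr : 1 ≤ r) :
    (∀ p q : Equiv.Perm (Fin r),
        ∑ a : Fin r, ((p a : ℤ) - (q a : ℤ)).natAbs ≤ 2 * ((r + 1) / 2) * (r / 2)) ∧
    (∃ p q : Equiv.Perm (Fin r),
        ∑ a : Fin r, ((p a : ℤ) - (q a : ℤ)).natAbs = 2 * ((r + 1) / 2) * (r / 2)) := by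
  set c : ℤ := (r : ℤ) - 1 with hc
  have hT : (∑ i ∈ Finset.range r, |2 * (i : ℤ) - c|)
      = ((2 * ((r + 1) / 2) * (r / 2) : ℕ) : ℤ) := by
    rw [hc, T_eq]
  have key : ∀ σ : Equiv.Perm (Fin r),
      (∑ a : Fin r, |2 * ((σ a : ℕ) : ℤ) - c|) = ∑ i ∈ Finset.range r, |2 * (i : ℤ) - c| := by
    intro σ
    rw [← Fin.sum_univ_eq_sum_range (fun i => |2 * (i : ℤ) - c|) r]
    exact Equiv.sum_comp σ (fun j : Fin r => |2 * ((j : ℕ) : ℤ) - c|)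
  constructor
  · intro p q
    rw [← Nat.cast_le (α := ℤ), Nat.cast_sum]
    have step : ∀ a : Fin r,
        2 * ((((p a : ℤ) - (q a : ℤ)).natAbs : ℤ))
          ≤ |2 * ((p a : ℕ) : ℤ) - c| + |2 * ((q a : ℕ) : ℤ) - c| := by
      intro a
      rw [Int.natCast_natAbs]
      have : 2 * |(p a : ℤ) - (q a : ℤ)| = |2 * ((p a : ℕ) : ℤ) - 2 * ((q a : ℕ) : ℤ)| := by
        rw [show 2 * ((p a : ℕ) : ℤ) - 2 * ((q a : ℕ) : ℤ)
              = 2 * (((p a : ℕ) : ℤ) - ((q a : ℕ) : ℤ)) from by ring, abs_mul, abs_two]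
      rw [this]
      calc |2 * ((p a : ℕ) : ℤ) - 2 * ((q a : ℕ) : ℤ)|
          ≤ |2 * ((p a : ℕ) : ℤ) - c| + |c - 2 * ((q a : ℕ) : ℤ)| := abs_sub_le _ _ _
        _ = |2 * ((p a : ℕ) : ℤ) - c| + |2 * ((q a : ℕ) : ℤ) - c| := by rw [abs_sub_comm c]
    have hsum : 2 * (∑ a : Fin r, (((p a : ℤ) - (q a : ℤ)).natAbs : ℤ))
        ≤ 2 * ((2 * ((r + 1) / 2) * (r / 2) : ℕ) : ℤ) := by
      rw [Finset.mul_sum]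
      calc (∑ a : Fin r, 2 * ((((p a : ℤ) - (q a : ℤ)).natAbs : ℤ)))
          ≤ ∑ a : Fin r, (|2 * ((p a : ℕ) : ℤ) - c| + |2 * ((q a : ℕ) : ℤ) - c|) :=
            Finset.sum_le_sum (fun a _ => step a)
        _ = (∑ a : Fin r, |2 * ((p a : ℕ) : ℤ) - c|)
            + (∑ a : Fin r, |2 * ((q a : ℕ) : ℤ) - c|) := Finset.sum_add_distrib
        _ = 2 * ((2 * ((r + 1) / 2) * (r / 2) : ℕ) : ℤ) := by
            rw [key p, key q, hT]; ring
    linarith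
  · refine ⟨Equiv.refl _, Fin.revPerm, ?_⟩
    apply Nat.cast_injective (R := ℤ)
    rw [Nat.cast_sum, ← hT, ← Fin.sum_univ_eq_sum_range (fun i => |2 * (i : ℤ) - c|) r]
    apply Finset.sum_congr rfl
    intro a _
    have hrev : ((Fin.revPerm a : Fin r) : ℕ) = r - 1 - (a : ℕ) := by
      simp [Fin.val_rev]; omega
    have ha : (a : ℕ) < r := a.isLt
    rw [Int.natCast_natAbs]
    simp only [Equiv.refl_apply, hrev]
    have : ((r - 1 - (a : ℕ) : ℕ) : ℤ) = c - (a : ℤ) := by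
      simp only [hc]; omega
    rw [this]
    congr 1
    ring
end
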